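/- Assume Q_f = P and that the symmetric matrix P⁻¹ − F P⁻¹ Fᵀ − H is positive definite with smallest eigenvalue λ_min. Let k ≥ 0 and define the MPC control in closed loop using k exact predictions and no delay: u_t = −(R + BᵀPB)⁻¹ Bᵀ (P A x_t + Σ_{i=0}^{min(k, T−t)−1} (Fᵀ)^i P w_{t+i}), where x is the trajectory generated by u from x_0. Let ALG = J(u) and OPT = inf_{v ∈ (ℝ^m)^T} J(v). Then ALG ≤ [ 1 + ‖F^k‖² ‖H‖ / λ_min ] · OPT. -/

import Mathlib

open Matrix

noncomputable def evNorm {n : ℕ} (x : Fin n → ℝ) : ℝ := Real.sqrt (∑ i, x i ^ 2)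

noncomputable def specNorm {n m : ℕ} (M : Matrix (Fin n) (Fin m) ℝ) : ℝ :=
  sSup {c : ℝ | ∃ x : Fin m → ℝ, evNorm x ≤ 1 ∧ c = evNorm (M *ᵥ x)}

noncomputable def lambdaMin {n : ℕ} (M : Matrix (Fin n) (Fin n) ℝ) : ℝ :=
  sInf {c : ℝ | ∃ x : Fin n → ℝ, evNorm x = 1 ∧ c = x ⬝ᵥ (M *ᵥ x)}

noncomputable def specRad {n : ℕ} (M : Matrix (Fin n) (Fin n) ℝ) : ENNReal :=
  spectralRadius ℂ (M.map Complex.ofReal)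

noncomputable def seqState {n m : ℕ} (A : Matrix (Fin n) (Fin n) ℝ)
    (B : Matrix (Fin n) (Fin m) ℝ) (x0 : Fin n → ℝ)
    (u : ℕ → Fin m → ℝ) (w : ℕ → Fin n → ℝ) : ℕ → Fin n → ℝ
  | 0 => x0
  | t + 1 => A *ᵥ seqState A B x0 u w t + B *ᵥ u t + w t

noncomputable def trajCost {n m : ℕ} (A : Matrix (Fin n) (Fin n) ℝ)
    (B : Matrix (Fin n) (Fin m) ℝ) (Q : Matrix (Fin n) (Fin n) ℝ)
    (R : Matrix (Fin m) (Fin m) ℝ) (Qf : Matrix (Fin n) (Fin n) ℝ)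
    (x0 : Fin n → ℝ) (w : ℕ → Fin n → ℝ) (T : ℕ) (u : ℕ → Fin m → ℝ) : ℝ :=
  (∑ t ∈ Finset.range T,
      (seqState A B x0 u w t ⬝ᵥ (Q *ᵥ seqState A B x0 u w t) + u t ⬝ᵥ (R *ᵥ u t)))
    + seqState A B x0 u w T ⬝ᵥ (Qf *ᵥ seqState A B x0 u w T)

noncomputable def mpcCost {n m : ℕ} (A : Matrix (Fin n) (Fin n) ℝ)
    (B : Matrix (Fin n) (Fin m) ℝ) (Q : Matrix (Fin n) (Fin n) ℝ)
    (R : Matrix (Fin m) (Fin m) ℝ) (P : Matrix (Fin n) (Fin n) ℝ)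
    (z : Fin n → ℝ) (what : ℕ → Fin n → ℝ) (k : ℕ) (u : Fin k → Fin m → ℝ) : ℝ :=
  trajCost A B Q R P z what k (fun t => if h : t < k then u ⟨t, h⟩ else 0)

/-!
Let `rₜ = ∑_{i < T - t} (Fᵀ)ⁱ P w_{t+i}` collect all future disturbances. Completing the square
at every stage against the value function `xᵀ P x + 2 (Fᵀ rₜ)ᵀ x` writes the cost of any control
sequence as a control-independent quantity `clairvoyantCost` plus `∑ₜ eₜᵀ (R + BᵀPB)⁻¹ eₜ`,
where `eₜ` measures how far `uₜ` is from the clairvoyant optimal input; in particular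
`clairvoyantCost ≤ OPT`. For the MPC input with `k` exact predictions, `eₜ = Bᵀ (Fᵀ)ᵏ r_{t+k}`,
so `ALG - clairvoyantCost ≤ ‖Fᵏ‖² ‖H‖ ∑ₜ ‖rₜ‖²`. Completing the square once more, now in the
disturbances, gives `clairvoyantCost ≥ ∑ₜ rₜᵀ (P⁻¹ - F P⁻¹ Fᵀ - H) rₜ ≥ λ_min ∑ₜ ‖rₜ‖²`.
-/

section Norms

open scoped Matrix.Norms.L2Operator

variable {n m : ℕ}

theorem evNorm_nonneg (x : Fin n → ℝ) : 0 ≤ evNorm x :=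
  Real.sqrt_nonneg _

theorem evNorm_eq_norm (x : Fin n → ℝ) : evNorm x = ‖WithLp.toLp 2 x‖ := by
  simp [evNorm, EuclideanSpace.norm_eq]

theorem dotProduct_le_evNorm_mul (x y : Fin n → ℝ) : x ⬝ᵥ y ≤ evNorm x * evNorm y :=
  Real.sum_mul_le_sqrt_mul_sqrt _ _ _

theorem specNorm_eq_l2_opNorm (M : Matrix (Fin n) (Fin m) ℝ) : specNorm M = ‖M‖ := by
  rw [Matrix.l2_opNorm_def, ← ContinuousLinearMap.sSup_unitClosedBall_eq_norm]
  refine congrArg sSup (Set.ext fun c => ?_)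
  constructor
  · rintro ⟨x, hx, rfl⟩
    refine ⟨WithLp.toLp 2 x, by simpa [evNorm_eq_norm] using hx, ?_⟩
    rw [evNorm_eq_norm]
    rfl
  · rintro ⟨y, hy, rfl⟩
    refine ⟨y.ofLp, by simpa [evNorm_eq_norm] using hy, ?_⟩
    rw [evNorm_eq_norm]
    rfl

theorem specNorm_nonneg (M : Matrix (Fin n) (Fin m) ℝ) : 0 ≤ specNorm M :=
  specNorm_eq_l2_opNorm M ▸ norm_nonneg M

theorem specNorm_transpose (M : Matrix (Fin n) (Fin m) ℝ) : specNorm Mᵀ = specNorm M := by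
  rw [specNorm_eq_l2_opNorm, specNorm_eq_l2_opNorm,
    ← Matrix.conjTranspose_eq_transpose_of_trivial, Matrix.l2_opNorm_conjTranspose]

theorem evNorm_mulVec_le (M : Matrix (Fin n) (Fin m) ℝ) (x : Fin m → ℝ) :
    evNorm (M *ᵥ x) ≤ specNorm M * evNorm x := by
  rw [evNorm_eq_norm, evNorm_eq_norm, specNorm_eq_l2_opNorm]
  exact Matrix.l2_opNorm_mulVec M (WithLp.toLp 2 x)

theorem dotProduct_mulVec_self_le (M : Matrix (Fin n) (Fin n) ℝ) (x : Fin n → ℝ) :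
    x ⬝ᵥ (M *ᵥ x) ≤ specNorm M * evNorm x ^ 2 :=
  calc x ⬝ᵥ (M *ᵥ x) ≤ evNorm x * evNorm (M *ᵥ x) := dotProduct_le_evNorm_mul _ _
    _ ≤ evNorm x * (specNorm M * evNorm x) :=
      mul_le_mul_of_nonneg_left (evNorm_mulVec_le M x) (evNorm_nonneg x)
    _ = specNorm M * evNorm x ^ 2 := by ring

theorem transpose_mulVec_dotProduct_le (G : Matrix (Fin n) (Fin m) ℝ)
    (H : Matrix (Fin m) (Fin m) ℝ) (x : Fin n → ℝ) :
    (Gᵀ *ᵥ x) ⬝ᵥ (H *ᵥ (Gᵀ *ᵥ x)) ≤ specNorm G ^ 2 * specNorm H * evNorm x ^ 2 := by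
  have hG : evNorm (Gᵀ *ᵥ x) ≤ specNorm G * evNorm x :=
    specNorm_transpose G ▸ evNorm_mulVec_le Gᵀ x
  calc (Gᵀ *ᵥ x) ⬝ᵥ (H *ᵥ (Gᵀ *ᵥ x)) ≤ specNorm H * evNorm (Gᵀ *ᵥ x) ^ 2 :=
        dotProduct_mulVec_self_le H _
    _ ≤ specNorm H * (specNorm G * evNorm x) ^ 2 :=
        mul_le_mul_of_nonneg_left (pow_le_pow_left₀ (evNorm_nonneg _) hG 2) (specNorm_nonneg H)
    _ = specNorm G ^ 2 * specNorm H * evNorm x ^ 2 := by ring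

end Norms

section LambdaMin

variable {n : ℕ} {M : Matrix (Fin n) (Fin n) ℝ}

theorem lambdaMin_eq_sInf_sphere :
    lambdaMin M = sInf ((fun y : EuclideanSpace ℝ (Fin n) => y.ofLp ⬝ᵥ (M *ᵥ y.ofLp)) ''
      Metric.sphere 0 1) := by
  refine congrArg sInf (Set.ext fun c => ⟨?_, ?_⟩)
  · rintro ⟨x, hx, rfl⟩
    exact ⟨WithLp.toLp 2 x, by simpa [evNorm_eq_norm] using hx, rfl⟩
  · rintro ⟨y, hy, rfl⟩
    exact ⟨y.ofLp, by simpa [evNorm_eq_norm] using hy, rfl⟩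

theorem lambdaMin_pos [NeZero n] (hM : M.PosDef) : 0 < lambdaMin M := by
  have hcont : Continuous fun y : EuclideanSpace ℝ (Fin n) => y.ofLp ⬝ᵥ (M *ᵥ y.ofLp) := by
    fun_prop
  obtain ⟨y, hy, hmin⟩ :=
    ((isCompact_sphere (0 : EuclideanSpace ℝ (Fin n)) 1).image hcont).sInf_mem
      ((NormedSpace.sphere_nonempty.2 zero_le_one).image _)
  rw [lambdaMin_eq_sInf_sphere, ← hmin]
  refine hM.dotProduct_mulVec_pos fun h0 => ?_
  simp [(WithLp.ofLp_eq_zero 2).1 h0] at hy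

theorem lambdaMin_nonneg (hM : M.PosDef) : 0 ≤ lambdaMin M :=
  Real.sInf_nonneg fun _ ⟨y, _, hc⟩ => hc ▸ hM.posSemidef.dotProduct_mulVec_nonneg y

theorem lambdaMin_mul_evNorm_sq_le (hM : M.PosDef) (x : Fin n → ℝ) :
    lambdaMin M * evNorm x ^ 2 ≤ x ⬝ᵥ (M *ᵥ x) := by
  rcases eq_or_ne x 0 with rfl | hx
  · simp [evNorm]
  have hpos : 0 < evNorm x := by
    rw [evNorm_eq_norm]; exact norm_pos_iff.2 (by simpa using hx)
  have hbdd : BddBelow {c : ℝ | ∃ y : Fin n → ℝ, evNorm y = 1 ∧ c = y ⬝ᵥ (M *ᵥ y)} :=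
    ⟨0, by rintro _ ⟨y, hy, rfl⟩; exact hM.posSemidef.dotProduct_mulVec_nonneg y⟩
  have hunit : lambdaMin M ≤ ((evNorm x)⁻¹ • x) ⬝ᵥ (M *ᵥ ((evNorm x)⁻¹ • x)) := by
    refine csInf_le hbdd ⟨_, ?_, rfl⟩
    rw [evNorm_eq_norm, WithLp.toLp_smul, norm_smul, ← evNorm_eq_norm, norm_inv,
      Real.norm_of_nonneg hpos.le, inv_mul_cancel₀ hpos.ne']
  rw [Matrix.mulVec_smul, dotProduct_smul, smul_dotProduct, smul_eq_mul, smul_eq_mul] at hunit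
  calc lambdaMin M * evNorm x ^ 2
      ≤ (evNorm x)⁻¹ * ((evNorm x)⁻¹ * x ⬝ᵥ (M *ᵥ x)) * evNorm x ^ 2 := by gcongr
    _ = x ⬝ᵥ (M *ᵥ x) := by field_simp

theorem evNorm_sq_le_inv_lambdaMin_mul (hM : M.PosDef) (x : Fin n → ℝ) :
    evNorm x ^ 2 ≤ (lambdaMin M)⁻¹ * (x ⬝ᵥ (M *ᵥ x)) := by
  rcases eq_or_ne x 0 with rfl | hx
  · simp [evNorm]
  have : NeZero n := ⟨by rintro rfl; exact hx (Subsingleton.elim _ _)⟩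
  rw [le_inv_mul_iff₀ (lambdaMin_pos hM)]
  exact lambdaMin_mul_evNorm_sq_le hM x

end LambdaMin

section QuadraticForms

variable {ι κ : Type*} [Fintype ι] [Fintype κ]

theorem dotProduct_mulVec_eq_transpose (M : Matrix ι κ ℝ) (x : ι → ℝ) (y : κ → ℝ) :
    x ⬝ᵥ (M *ᵥ y) = y ⬝ᵥ (Mᵀ *ᵥ x) := by
  rw [dotProduct_mulVec, ← mulVec_transpose, dotProduct_comm]

theorem dotProduct_transpose_mul_mulVec (M : Matrix ι κ ℝ) (N : Matrix ι ι ℝ) (x y : κ → ℝ) :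
    x ⬝ᵥ ((Mᵀ * N * M) *ᵥ y) = (M *ᵥ x) ⬝ᵥ (N *ᵥ (M *ᵥ y)) := by
  rw [Matrix.mul_assoc, ← mulVec_mulVec, dotProduct_mulVec_eq_transpose, transpose_transpose,
    dotProduct_comm, mulVec_mulVec]

theorem Matrix.IsSymm.dotProduct_mulVec_comm {M : Matrix ι ι ℝ} (hM : M.IsSymm) (x y : ι → ℝ) :
    x ⬝ᵥ (M *ᵥ y) = y ⬝ᵥ (M *ᵥ x) := by
  rw [dotProduct_mulVec_eq_transpose, hM.eq]

theorem Matrix.IsSymm.dotProduct_mulVec_add {M : Matrix ι ι ℝ} (hM : M.IsSymm) (x y : ι → ℝ) :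
    (x + y) ⬝ᵥ (M *ᵥ (x + y)) = x ⬝ᵥ (M *ᵥ x) + 2 * (x ⬝ᵥ (M *ᵥ y)) + y ⬝ᵥ (M *ᵥ y) := by
  rw [mulVec_add, dotProduct_add, add_dotProduct, add_dotProduct, hM.dotProduct_mulVec_comm y x]
  ring

theorem Matrix.IsSymm.dotProduct_mulVec_add_two_dotProduct [DecidableEq ι] {M : Matrix ι ι ℝ}
    (hM : M.IsSymm) (hMu : IsUnit M) (x c : ι → ℝ) :
    x ⬝ᵥ (M *ᵥ x) + 2 * (c ⬝ᵥ x)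
      = (M *ᵥ x + c) ⬝ᵥ (M⁻¹ *ᵥ (M *ᵥ x + c)) - c ⬝ᵥ (M⁻¹ *ᵥ c) := by
  have hinv : M⁻¹ * M = 1 := nonsing_inv_mul M ((isUnit_iff_isUnit_det M).1 hMu)
  have hcross : (M *ᵥ x) ⬝ᵥ (M⁻¹ *ᵥ c) = c ⬝ᵥ x := by
    rw [hM.inv.dotProduct_mulVec_comm, mulVec_mulVec, hinv, one_mulVec, dotProduct_comm]
  rw [hM.inv.dotProduct_mulVec_add, hcross, mulVec_mulVec, hinv, one_mulVec,
    dotProduct_comm (M *ᵥ x)]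
  ring

end QuadraticForms

section Riccati

variable {ι κ : Type*} [Fintype ι] [Fintype κ]
  {A Q P F H : Matrix ι ι ℝ} {B : Matrix ι κ ℝ} {R : Matrix κ κ ℝ}

theorem input_complete_square [DecidableEq κ] (hP : P.IsSymm) (hS : (R + Bᵀ * P * B).IsSymm)
    (hSu : IsUnit (R + Bᵀ * P * B)) (u : κ → ℝ) (v c : ι → ℝ) :
    u ⬝ᵥ (R *ᵥ u) + ((v + B *ᵥ u) ⬝ᵥ (P *ᵥ (v + B *ᵥ u)) + 2 * (c ⬝ᵥ (v + B *ᵥ u)))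
      = v ⬝ᵥ (P *ᵥ v) + 2 * (c ⬝ᵥ v)
        - (P *ᵥ v + c) ⬝ᵥ ((B * (R + Bᵀ * P * B)⁻¹ * Bᵀ) *ᵥ (P *ᵥ v + c))
        + ((R + Bᵀ * P * B) *ᵥ u + Bᵀ *ᵥ (P *ᵥ v + c))
          ⬝ᵥ ((R + Bᵀ * P * B)⁻¹ *ᵥ ((R + Bᵀ * P * B) *ᵥ u + Bᵀ *ᵥ (P *ᵥ v + c))) := by
  set z := P *ᵥ v + c
  have hsq := hS.dotProduct_mulVec_add_two_dotProduct hSu u (Bᵀ *ᵥ z)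
  have hS_form :
      u ⬝ᵥ ((R + Bᵀ * P * B) *ᵥ u) = u ⬝ᵥ (R *ᵥ u) + (B *ᵥ u) ⬝ᵥ (P *ᵥ (B *ᵥ u)) := by
    rw [add_mulVec, dotProduct_add, dotProduct_transpose_mul_mulVec]
  have hH_form : z ⬝ᵥ ((B * (R + Bᵀ * P * B)⁻¹ * Bᵀ) *ᵥ z)
      = (Bᵀ *ᵥ z) ⬝ᵥ ((R + Bᵀ * P * B)⁻¹ *ᵥ (Bᵀ *ᵥ z)) := by
    simpa using dotProduct_transpose_mul_mulVec Bᵀ (R + Bᵀ * P * B)⁻¹ z z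
  have hlin : (Bᵀ *ᵥ z) ⬝ᵥ u = (P *ᵥ v) ⬝ᵥ (B *ᵥ u) + c ⬝ᵥ (B *ᵥ u) := by
    rw [dotProduct_comm, dotProduct_mulVec_eq_transpose, transpose_transpose, add_dotProduct]
  have hcross : v ⬝ᵥ (P *ᵥ (B *ᵥ u)) = (P *ᵥ v) ⬝ᵥ (B *ᵥ u) := by
    rw [hP.dotProduct_mulVec_comm, dotProduct_comm]
  rw [hP.dotProduct_mulVec_add, dotProduct_add c, hH_form]
  linarith

theorem riccati_value_identity (hP : P.IsSymm) (hH : H.IsSymm) (hF : F = A - H * P * A)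
    (hDARE : P = Q + Aᵀ * P * A - Aᵀ * P * H * P * A) (x w c : ι → ℝ) :
    x ⬝ᵥ (Q *ᵥ x) + ((A *ᵥ x + w) ⬝ᵥ (P *ᵥ (A *ᵥ x + w)) + 2 * (c ⬝ᵥ (A *ᵥ x + w))
        - (P *ᵥ (A *ᵥ x + w) + c) ⬝ᵥ (H *ᵥ (P *ᵥ (A *ᵥ x + w) + c)))
      = x ⬝ᵥ (P *ᵥ x) + 2 * ((Fᵀ *ᵥ (P *ᵥ w + c)) ⬝ᵥ x)
        + (w ⬝ᵥ (P *ᵥ w) + 2 * (c ⬝ᵥ w) - (P *ᵥ w + c) ⬝ᵥ (H *ᵥ (P *ᵥ w + c))) := by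
  set a := A *ᵥ x
  set b := P *ᵥ w + c
  have hz : P *ᵥ (a + w) + c = P *ᵥ a + b := by rw [mulVec_add, add_assoc]
  have hvalue :
      x ⬝ᵥ (P *ᵥ x) = x ⬝ᵥ (Q *ᵥ x) + a ⬝ᵥ (P *ᵥ a) - (P *ᵥ a) ⬝ᵥ (H *ᵥ (P *ᵥ a)) := by
    have hPHP : Aᵀ * P * H * P * A = Aᵀ * (P * H * P) * A := by simp only [Matrix.mul_assoc]
    conv_lhs => rw [hDARE]
    rw [sub_mulVec, add_mulVec, dotProduct_sub, dotProduct_add, hPHP,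
      dotProduct_transpose_mul_mulVec, dotProduct_transpose_mul_mulVec, ← mulVec_mulVec,
      ← mulVec_mulVec, hP.dotProduct_mulVec_comm a (H *ᵥ (P *ᵥ a)), dotProduct_comm (H *ᵥ _)]
  have hlin : (Fᵀ *ᵥ b) ⬝ᵥ x = b ⬝ᵥ a - (P *ᵥ a) ⬝ᵥ (H *ᵥ b) := by
    rw [dotProduct_comm, ← dotProduct_mulVec_eq_transpose, hF, sub_mulVec, dotProduct_sub,
      ← mulVec_mulVec, ← mulVec_mulVec, hH.dotProduct_mulVec_comm b]
  have hb : b ⬝ᵥ a = a ⬝ᵥ (P *ᵥ w) + c ⬝ᵥ a := by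
    rw [add_dotProduct, dotProduct_comm (P *ᵥ w)]
  rw [hz, hP.dotProduct_mulVec_add, hH.dotProduct_mulVec_add, dotProduct_add c]
  linarith

theorem stageCost_add_value_eq [DecidableEq κ] (hP : P.IsSymm) (hS : (R + Bᵀ * P * B).IsSymm)
    (hSu : IsUnit (R + Bᵀ * P * B)) (hH : H = B * (R + Bᵀ * P * B)⁻¹ * Bᵀ)
    (hF : F = A - H * P * A) (hDARE : P = Q + Aᵀ * P * A - Aᵀ * P * H * P * A)
    (x w c : ι → ℝ) (u : κ → ℝ) :
    x ⬝ᵥ (Q *ᵥ x) + u ⬝ᵥ (R *ᵥ u)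
        + ((A *ᵥ x + B *ᵥ u + w) ⬝ᵥ (P *ᵥ (A *ᵥ x + B *ᵥ u + w))
          + 2 * (c ⬝ᵥ (A *ᵥ x + B *ᵥ u + w)))
      = x ⬝ᵥ (P *ᵥ x) + 2 * ((Fᵀ *ᵥ (P *ᵥ w + c)) ⬝ᵥ x)
        + (w ⬝ᵥ (P *ᵥ w) + 2 * (c ⬝ᵥ w) - (P *ᵥ w + c) ⬝ᵥ (H *ᵥ (P *ᵥ w + c)))
        + ((R + Bᵀ * P * B) *ᵥ u + Bᵀ *ᵥ (P *ᵥ (A *ᵥ x) + (P *ᵥ w + c)))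
          ⬝ᵥ ((R + Bᵀ * P * B)⁻¹ *ᵥ
            ((R + Bᵀ * P * B) *ᵥ u + Bᵀ *ᵥ (P *ᵥ (A *ᵥ x) + (P *ᵥ w + c)))) := by
  have hHsymm : H.IsSymm := by
    rw [hH, IsSymm, transpose_mul, transpose_mul, transpose_transpose, hS.inv.eq,
      ← Matrix.mul_assoc]
  have hinput := input_complete_square hP hS hSu u (A *ᵥ x + w) c
  have hstate := riccati_value_identity hP hHsymm hF hDARE x w c
  rw [← hH] at hinput
  have hz : P *ᵥ (A *ᵥ x) + (P *ᵥ w + c) = P *ᵥ (A *ᵥ x + w) + c := by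
    rw [mulVec_add, add_assoc]
  rw [add_right_comm _ (B *ᵥ u), hz]
  linarith

end Riccati

theorem Finset.sum_range_shift_le {f : ℕ → ℝ} {T : ℕ} (hf : ∀ s, 0 ≤ f s)
    (hT : ∀ s, T ≤ s → f s = 0) (k : ℕ) :
    ∑ t ∈ Finset.range T, f (t + k) ≤ ∑ t ∈ Finset.range T, f t := by
  have htail : ∑ t ∈ Finset.range k, f (T + t) = 0 :=
    Finset.sum_eq_zero fun t _ => hT _ (Nat.le_add_right T t)
  have hsplit := Finset.sum_range_add f T k
  rw [add_comm T k, Finset.sum_range_add, htail, add_zero] at hsplit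
  have hhead : 0 ≤ ∑ t ∈ Finset.range k, f t := Finset.sum_nonneg fun t _ => hf t
  simp only [add_comm _ k]
  linarith

section Disturbance

open Finset

variable {n : ℕ} (F P : Matrix (Fin n) (Fin n) ℝ) (w : ℕ → Fin n → ℝ)

noncomputable def disturbanceSum (t j : ℕ) : Fin n → ℝ :=
  ∑ i ∈ range j, ((Fᵀ) ^ i * P) *ᵥ w (t + i)

noncomputable def futureDisturbance (T t : ℕ) : Fin n → ℝ :=
  disturbanceSum F P w t (T - t)

theorem disturbanceSum_add (t j l : ℕ) :
    disturbanceSum F P w t (j + l)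
      = disturbanceSum F P w t j + (Fᵀ) ^ j *ᵥ disturbanceSum F P w (t + j) l := by
  simp only [disturbanceSum, sum_range_add, mulVec_sum, mulVec_mulVec, ← Matrix.mul_assoc,
    ← pow_add, add_assoc]

theorem futureDisturbance_of_le {T t : ℕ} (h : T ≤ t) : futureDisturbance F P w T t = 0 := by
  simp [futureDisturbance, disturbanceSum, Nat.sub_eq_zero_of_le h]

theorem futureDisturbance_of_lt {T t : ℕ} (h : t < T) :
    futureDisturbance F P w T t = P *ᵥ w t + Fᵀ *ᵥ futureDisturbance F P w T (t + 1) := by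
  have hsplit := disturbanceSum_add F P w t 1 (T - (t + 1))
  rw [show 1 + (T - (t + 1)) = T - t by omega] at hsplit
  simpa [futureDisturbance, disturbanceSum] using hsplit

theorem futureDisturbance_sub_disturbanceSum_min (T t k : ℕ) :
    futureDisturbance F P w T t - disturbanceSum F P w t (min k (T - t))
      = (Fᵀ) ^ k *ᵥ futureDisturbance F P w T (t + k) := by
  rcases le_total k (T - t) with h | h
  · rw [min_eq_left h, futureDisturbance, futureDisturbance, ← Nat.add_sub_cancel' h,
      disturbanceSum_add, show T - (t + k) = k + (T - t - k) - k by omega, Nat.add_sub_cancel_left]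
    abel
  · rw [min_eq_right h, futureDisturbance_of_le F P w (t := t + k) (by omega), mulVec_zero,
      futureDisturbance, sub_self]

theorem sum_prediction_error_le (H : Matrix (Fin n) (Fin n) ℝ) (T k : ℕ) :
    ∑ t ∈ range T, ((Fᵀ) ^ k *ᵥ futureDisturbance F P w T (t + k))
        ⬝ᵥ (H *ᵥ ((Fᵀ) ^ k *ᵥ futureDisturbance F P w T (t + k)))
      ≤ specNorm (F ^ k) ^ 2 * specNorm H
          * ∑ t ∈ range T, evNorm (futureDisturbance F P w T t) ^ 2 :=
  calc _ ≤ ∑ t ∈ range T,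
        specNorm (F ^ k) ^ 2 * specNorm H * evNorm (futureDisturbance F P w T (t + k)) ^ 2 :=
        sum_le_sum fun t _ => by
          rw [← transpose_pow]
          exact transpose_mulVec_dotProduct_le _ _ _
    _ ≤ _ := by
        rw [← mul_sum]
        refine mul_le_mul_of_nonneg_left ?_ (mul_nonneg (sq_nonneg _) (specNorm_nonneg H))
        exact sum_range_shift_le (f := fun s => evNorm (futureDisturbance F P w T s) ^ 2)
          (fun s => sq_nonneg _)
          (fun s hs => by simp [futureDisturbance_of_le F P w hs, evNorm]) k

end Disturbance

noncomputable def clairvoyantCost {n : ℕ} (P F H : Matrix (Fin n) (Fin n) ℝ) (x0 : Fin n → ℝ)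
    (w : ℕ → Fin n → ℝ) (T : ℕ) : ℝ :=
  x0 ⬝ᵥ (P *ᵥ x0) + 2 * ((Fᵀ *ᵥ futureDisturbance F P w T 0) ⬝ᵥ x0)
    + ∑ t ∈ Finset.range T,
      (w t ⬝ᵥ (P *ᵥ w t) + 2 * ((Fᵀ *ᵥ futureDisturbance F P w T (t + 1)) ⬝ᵥ w t)
        - futureDisturbance F P w T t ⬝ᵥ (H *ᵥ futureDisturbance F P w T t))

section CostDecomposition

open Finset

variable {n m : ℕ} {A Q P F H : Matrix (Fin n) (Fin n) ℝ} {B : Matrix (Fin n) (Fin m) ℝ}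
  {R : Matrix (Fin m) (Fin m) ℝ}

theorem trajCost_eq_clairvoyantCost_add (hP : P.IsSymm) (hS : (R + Bᵀ * P * B).IsSymm)
    (hSu : IsUnit (R + Bᵀ * P * B)) (hH : H = B * (R + Bᵀ * P * B)⁻¹ * Bᵀ)
    (hF : F = A - H * P * A) (hDARE : P = Q + Aᵀ * P * A - Aᵀ * P * H * P * A)
    (x0 : Fin n → ℝ) (w : ℕ → Fin n → ℝ) (T : ℕ) (v : ℕ → Fin m → ℝ) :
    trajCost A B Q R P x0 w T v = clairvoyantCost P F H x0 w T
      + ∑ t ∈ range T,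
        ((R + Bᵀ * P * B) *ᵥ v t
            + Bᵀ *ᵥ (P *ᵥ (A *ᵥ seqState A B x0 v w t) + futureDisturbance F P w T t))
          ⬝ᵥ ((R + Bᵀ * P * B)⁻¹ *ᵥ ((R + Bᵀ * P * B) *ᵥ v t
            + Bᵀ *ᵥ (P *ᵥ (A *ᵥ seqState A B x0 v w t) + futureDisturbance F P w T t))) := by
  unfold trajCost clairvoyantCost
  set x := seqState A B x0 v w
  set r := futureDisturbance F P w T
  set V : ℕ → ℝ := fun t => x t ⬝ᵥ (P *ᵥ x t) + 2 * ((Fᵀ *ᵥ r t) ⬝ᵥ x t)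
  have hstep : ∀ t ∈ range T, x t ⬝ᵥ (Q *ᵥ x t) + v t ⬝ᵥ (R *ᵥ v t) + (V (t + 1) - V t)
      = (w t ⬝ᵥ (P *ᵥ w t) + 2 * ((Fᵀ *ᵥ r (t + 1)) ⬝ᵥ w t) - r t ⬝ᵥ (H *ᵥ r t))
        + ((R + Bᵀ * P * B) *ᵥ v t + Bᵀ *ᵥ (P *ᵥ (A *ᵥ x t) + r t))
          ⬝ᵥ ((R + Bᵀ * P * B)⁻¹ *ᵥ
            ((R + Bᵀ * P * B) *ᵥ v t + Bᵀ *ᵥ (P *ᵥ (A *ᵥ x t) + r t))) := by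
    intro t ht
    have h := stageCost_add_value_eq hP hS hSu hH hF hDARE (x t) (w t) (Fᵀ *ᵥ r (t + 1)) (v t)
    rw [← futureDisturbance_of_lt F P w (mem_range.1 ht)] at h
    have hx : x (t + 1) = A *ᵥ x t + B *ᵥ v t + w t := rfl
    simp only [V, hx]
    linarith
  have hVT : V T = x T ⬝ᵥ (P *ᵥ x T) := by
    simp [V, r, futureDisturbance_of_le F P w le_rfl]
  have hV0 : V 0 = x0 ⬝ᵥ (P *ᵥ x0) + 2 * ((Fᵀ *ᵥ r 0) ⬝ᵥ x0) := rfl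
  have hsum := sum_congr rfl hstep
  rw [sum_add_distrib, sum_range_sub V, hVT, hV0] at hsum
  simp only [sum_add_distrib] at hsum ⊢
  linarith

theorem clairvoyantCost_le_trajCost (hP : P.IsSymm) (hS : (R + Bᵀ * P * B).PosDef)
    (hH : H = B * (R + Bᵀ * P * B)⁻¹ * Bᵀ) (hF : F = A - H * P * A)
    (hDARE : P = Q + Aᵀ * P * A - Aᵀ * P * H * P * A)
    (x0 : Fin n → ℝ) (w : ℕ → Fin n → ℝ) (T : ℕ) (v : ℕ → Fin m → ℝ) :
    clairvoyantCost P F H x0 w T ≤ trajCost A B Q R P x0 w T v := by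
  rw [trajCost_eq_clairvoyantCost_add hP (isHermitian_iff_isSymm.1 hS.isHermitian) hS.isUnit
    hH hF hDARE]
  exact le_add_of_nonneg_right
    (sum_nonneg fun t _ => hS.inv.posSemidef.dotProduct_mulVec_nonneg _)

theorem sum_dotProduct_mulVec_le_clairvoyantCost (hP : P.PosDef) (x0 : Fin n → ℝ)
    (w : ℕ → Fin n → ℝ) (T : ℕ) :
    ∑ t ∈ range T, futureDisturbance F P w T t
        ⬝ᵥ ((P⁻¹ - F * P⁻¹ * Fᵀ - H) *ᵥ futureDisturbance F P w T t)
      ≤ clairvoyantCost P F H x0 w T := by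
  have hPs : P.IsSymm := isHermitian_iff_isSymm.1 hP.isHermitian
  set r := futureDisturbance F P w T
  set φ : ℕ → ℝ := fun s => (Fᵀ *ᵥ r s) ⬝ᵥ (P⁻¹ *ᵥ (Fᵀ *ᵥ r s))
  have hinit : -φ 0 ≤ x0 ⬝ᵥ (P *ᵥ x0) + 2 * ((Fᵀ *ᵥ r 0) ⬝ᵥ x0) := by
    rw [hPs.dotProduct_mulVec_add_two_dotProduct hP.isUnit, sub_eq_neg_add]
    exact le_add_of_nonneg_right (hP.inv.posSemidef.dotProduct_mulVec_nonneg _)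
  have hstage : ∀ t ∈ range T,
      w t ⬝ᵥ (P *ᵥ w t) + 2 * ((Fᵀ *ᵥ r (t + 1)) ⬝ᵥ w t) - r t ⬝ᵥ (H *ᵥ r t)
        = r t ⬝ᵥ (P⁻¹ *ᵥ r t) - r t ⬝ᵥ (H *ᵥ r t) - φ (t + 1) := by
    intro t ht
    rw [hPs.dotProduct_mulVec_add_two_dotProduct hP.isUnit,
      ← futureDisturbance_of_lt F P w (mem_range.1 ht)]
    ring
  have hquad : ∀ t ∈ range T, r t ⬝ᵥ ((P⁻¹ - F * P⁻¹ * Fᵀ - H) *ᵥ r t)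
      = r t ⬝ᵥ (P⁻¹ *ᵥ r t) - r t ⬝ᵥ (H *ᵥ r t) - φ t := by
    intro t _
    have hφ : r t ⬝ᵥ ((F * P⁻¹ * Fᵀ) *ᵥ r t) = φ t := by
      have h := dotProduct_transpose_mul_mulVec Fᵀ P⁻¹ (r t) (r t)
      rwa [transpose_transpose] at h
    rw [sub_mulVec, sub_mulVec, dotProduct_sub, dotProduct_sub, hφ]
    ring
  have hshift : ∑ t ∈ range T, φ (t + 1) = ∑ t ∈ range T, φ t - φ 0 := by
    have hφT : φ T = 0 := by simp [φ, r, futureDisturbance_of_le F P w le_rfl]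
    linarith [sum_range_succ' φ T, sum_range_succ φ T]
  unfold clairvoyantCost
  rw [sum_congr rfl hstage, sum_congr rfl hquad]
  simp only [sum_sub_distrib] at hshift ⊢
  linarith

end CostDecomposition

section ModelPredictiveControl

open Finset

variable {n m : ℕ} {A Q P F H : Matrix (Fin n) (Fin n) ℝ} {B : Matrix (Fin n) (Fin m) ℝ}
  {R : Matrix (Fin m) (Fin m) ℝ}

theorem seqState_eq_of_step {x0 : Fin n → ℝ} {u : ℕ → Fin m → ℝ} {w : ℕ → Fin n → ℝ}
    {x : ℕ → Fin n → ℝ} (hx0 : x 0 = x0) (hx : ∀ t, x (t + 1) = A *ᵥ x t + B *ᵥ u t + w t) :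
    seqState A B x0 u w = x := by
  funext t
  induction t with
  | zero => exact hx0.symm
  | succ t ih => rw [hx t, ← ih]; rfl

theorem trajCost_mpc_eq_clairvoyantCost_add (hP : P.IsSymm) (hS : (R + Bᵀ * P * B).IsSymm)
    (hSu : IsUnit (R + Bᵀ * P * B)) (hH : H = B * (R + Bᵀ * P * B)⁻¹ * Bᵀ)
    (hF : F = A - H * P * A) (hDARE : P = Q + Aᵀ * P * A - Aᵀ * P * H * P * A)
    {T k : ℕ} {x0 : Fin n → ℝ} {w : ℕ → Fin n → ℝ} {x : ℕ → Fin n → ℝ} {u : ℕ → Fin m → ℝ}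
    (hx0 : x 0 = x0) (hx : ∀ t, x (t + 1) = A *ᵥ x t + B *ᵥ u t + w t)
    (hu : ∀ t, u t = -((((R + Bᵀ * P * B)⁻¹ * Bᵀ) *ᵥ
        (P *ᵥ (A *ᵥ x t) + disturbanceSum F P w t (min k (T - t)))))) :
    trajCost A B Q R P x0 w T u = clairvoyantCost P F H x0 w T
      + ∑ t ∈ range T, ((Fᵀ) ^ k *ᵥ futureDisturbance F P w T (t + k))
          ⬝ᵥ (H *ᵥ ((Fᵀ) ^ k *ᵥ futureDisturbance F P w T (t + k))) := by
  rw [trajCost_eq_clairvoyantCost_add hP hS hSu hH hF hDARE, seqState_eq_of_step hx0 hx]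
  congr 1
  refine sum_congr rfl fun t _ => ?_
  have hSinv : (R + Bᵀ * P * B) * (R + Bᵀ * P * B)⁻¹ = 1 :=
    mul_nonsing_inv _ ((isUnit_iff_isUnit_det _).1 hSu)
  have herr : (R + Bᵀ * P * B) *ᵥ u t + Bᵀ *ᵥ (P *ᵥ (A *ᵥ x t) + futureDisturbance F P w T t)
      = Bᵀ *ᵥ ((Fᵀ) ^ k *ᵥ futureDisturbance F P w T (t + k)) := by
    rw [← futureDisturbance_sub_disturbanceSum_min, hu, mulVec_neg, mulVec_mulVec,
      ← Matrix.mul_assoc, hSinv, Matrix.one_mul, neg_add_eq_sub, ← mulVec_sub,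
      add_sub_add_left_eq_sub]
  have hquad := dotProduct_transpose_mul_mulVec Bᵀ (R + Bᵀ * P * B)⁻¹
    ((Fᵀ) ^ k *ᵥ futureDisturbance F P w T (t + k))
    ((Fᵀ) ^ k *ᵥ futureDisturbance F P w T (t + k))
  rw [transpose_transpose, ← hH] at hquad
  rw [herr, hquad]

theorem sum_evNorm_sq_le_clairvoyantCost (hP : P.PosDef) (hM : (P⁻¹ - F * P⁻¹ * Fᵀ - H).PosDef)
    (x0 : Fin n → ℝ) (w : ℕ → Fin n → ℝ) (T : ℕ) :
    ∑ t ∈ range T, evNorm (futureDisturbance F P w T t) ^ 2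
      ≤ (lambdaMin (P⁻¹ - F * P⁻¹ * Fᵀ - H))⁻¹ * clairvoyantCost P F H x0 w T :=
  calc _ ≤ ∑ t ∈ range T, (lambdaMin (P⁻¹ - F * P⁻¹ * Fᵀ - H))⁻¹ * (futureDisturbance F P w T t
        ⬝ᵥ ((P⁻¹ - F * P⁻¹ * Fᵀ - H) *ᵥ futureDisturbance F P w T t)) :=
        sum_le_sum fun t _ => evNorm_sq_le_inv_lambdaMin_mul hM _
    _ ≤ _ := by
        rw [← mul_sum]
        exact mul_le_mul_of_nonneg_left (sum_dotProduct_mulVec_le_clairvoyantCost hP x0 w T)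
          (inv_nonneg.2 (lambdaMin_nonneg hM))

end ModelPredictiveControl

theorem stmt14_general (n m T k : ℕ)
    (A : Matrix (Fin n) (Fin n) ℝ) (B : Matrix (Fin n) (Fin m) ℝ)
    (Q : Matrix (Fin n) (Fin n) ℝ) (R : Matrix (Fin m) (Fin m) ℝ)
    (P : Matrix (Fin n) (Fin n) ℝ)
    (hR : R.PosDef) (hP : P.PosDef)
    (hDARE : P = Q + Aᵀ * P * A - Aᵀ * P * B * (R + Bᵀ * P * B)⁻¹ * (Bᵀ * P * A))
    (F : Matrix (Fin n) (Fin n) ℝ)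
    (hF : F = A - B * ((R + Bᵀ * P * B)⁻¹ * (Bᵀ * P * A)))
    (Hmat : Matrix (Fin n) (Fin n) ℝ)
    (hHmat : Hmat = B * (R + Bᵀ * P * B)⁻¹ * Bᵀ)
    (hPD : (P⁻¹ - F * P⁻¹ * Fᵀ - Hmat).PosDef)
    (x0 : Fin n → ℝ) (w : ℕ → Fin n → ℝ)
    (x : ℕ → Fin n → ℝ) (u : ℕ → Fin m → ℝ)
    (hx0 : x 0 = x0)
    (hx : ∀ t, x (t + 1) = A *ᵥ x t + B *ᵥ u t + w t)
    (hu : ∀ t, u t = -((((R + Bᵀ * P * B)⁻¹ * Bᵀ) *ᵥ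
        (P *ᵥ (A *ᵥ x t)
          + ∑ i ∈ Finset.range (min k (T - t)), ((Fᵀ) ^ i * P) *ᵥ w (t + i))))) :
    trajCost A B Q R P x0 w T u ≤
      (1 + specNorm (F ^ k) ^ 2 * specNorm Hmat
          / lambdaMin (P⁻¹ - F * P⁻¹ * Fᵀ - Hmat))
        * ⨅ v : ℕ → Fin m → ℝ, trajCost A B Q R P x0 w T v := by
  have hF' : F = A - Hmat * P * A := by rw [hF, hHmat]; simp only [Matrix.mul_assoc]
  have hDARE' : P = Q + Aᵀ * P * A - Aᵀ * P * Hmat * P * A := by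
    rw [hHmat]; convert hDARE using 2; simp only [Matrix.mul_assoc]
  have hPs : P.IsSymm := Matrix.isHermitian_iff_isSymm.1 hP.isHermitian
  have hS : (R + Bᵀ * P * B).PosDef :=
    hR.add_posSemidef (by simpa using hP.posSemidef.conjTranspose_mul_mul_same B)
  have hALG := trajCost_mpc_eq_clairvoyantCost_add hPs
    (Matrix.isHermitian_iff_isSymm.1 hS.isHermitian) hS.isUnit hHmat hF' hDARE' hx0 hx hu
  have hOPT : clairvoyantCost P F Hmat x0 w T ≤ ⨅ v, trajCost A B Q R P x0 w T v :=
    le_ciInf fun v => clairvoyantCost_le_trajCost hPs hS hHmat hF' hDARE' x0 w T v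
  have hgap := sum_prediction_error_le F P w Hmat T k
  have hnorm := sum_evNorm_sq_le_clairvoyantCost hP hPD x0 w T
  set K := specNorm (F ^ k) ^ 2 * specNorm Hmat
  set lam := lambdaMin (P⁻¹ - F * P⁻¹ * Fᵀ - Hmat)
  have hK : 0 ≤ K := mul_nonneg (sq_nonneg _) (specNorm_nonneg Hmat)
  have hratio : 0 ≤ K / lam := div_nonneg hK (lambdaMin_nonneg hPD)
  calc trajCost A B Q R P x0 w T u
      ≤ clairvoyantCost P F Hmat x0 w T + K * (lam⁻¹ * clairvoyantCost P F Hmat x0 w T) := by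
        rw [hALG]
        gcongr
        exact hgap.trans (mul_le_mul_of_nonneg_left hnorm hK)
    _ = (1 + K / lam) * clairvoyantCost P F Hmat x0 w T := by ring
    _ ≤ (1 + K / lam) * ⨅ v, trajCost A B Q R P x0 w T v := by gcongr

theorem stmt14 (n m T k : ℕ)
    (A : Matrix (Fin n) (Fin n) ℝ) (B : Matrix (Fin n) (Fin m) ℝ)
    (Q : Matrix (Fin n) (Fin n) ℝ) (R : Matrix (Fin m) (Fin m) ℝ)
    (P : Matrix (Fin n) (Fin n) ℝ)
    (hQ : Q.PosSemidef) (hR : R.PosDef) (hP : P.PosDef)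
    (hDARE : P = Q + Aᵀ * P * A - Aᵀ * P * B * (R + Bᵀ * P * B)⁻¹ * (Bᵀ * P * A))
    (F : Matrix (Fin n) (Fin n) ℝ)
    (hF : F = A - B * ((R + Bᵀ * P * B)⁻¹ * (Bᵀ * P * A)))
    (Hmat : Matrix (Fin n) (Fin n) ℝ)
    (hHmat : Hmat = B * (R + Bᵀ * P * B)⁻¹ * Bᵀ)
    (hPD : (P⁻¹ - F * P⁻¹ * Fᵀ - Hmat).PosDef)
    (x0 : Fin n → ℝ) (w : ℕ → Fin n → ℝ)
    (x : ℕ → Fin n → ℝ) (u : ℕ → Fin m → ℝ)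
    (hx0 : x 0 = x0)
    (hx : ∀ t, x (t + 1) = A *ᵥ x t + B *ᵥ u t + w t)
    (hu : ∀ t, u t = -((((R + Bᵀ * P * B)⁻¹ * Bᵀ) *ᵥ
        (P *ᵥ (A *ᵥ x t)
          + ∑ i ∈ Finset.range (min k (T - t)), ((Fᵀ) ^ i * P) *ᵥ w (t + i))))) :
    trajCost A B Q R P x0 w T u ≤
      (1 + specNorm (F ^ k) ^ 2 * specNorm Hmat
          / lambdaMin (P⁻¹ - F * P⁻¹ * Fᵀ - Hmat))
        * ⨅ v : ℕ → Fin m → ℝ, trajCost A B Q R P x0 w T v :=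
  stmt14_general n m T k A B Q R P hR hP hDARE F hF Hmat hHmat hPD x0 w x u hx0 hx hu
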